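/- arXiv:hep-th/9401087 — 7 statements merged into one kernel-verified Lean document; each statement's English description precedes it below -/
import Mathlib

section
/- Let R be a diagonalizable linear operator on V⊗V with (R−q)(R−1)=0 where q≠1, q≠0. Let R_S = Im(R−1) and R_Λ = Im(R−q) (the eigenspaces for eigenvalues q and 1 respectively, so V⊗V = R_Λ ⊕ R_S). Then the subspace R_S^⊥ ⊗ R_S + R_Λ^⊥ ⊗ R_Λ of V*⊗V*⊗V⊗V equals the image of R*⊗R^{-1} − 1, where R* is the dual operator on V*⊗V*. -/
/-!
With `P = (q - 1)⁻¹ (R - 1)` the Hecke relation says that `P` is idempotent, so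
`R = 1 + (q - 1) P`, `R⁻¹ = 1 + (q⁻¹ - 1) P`, and the annihilators of `R_S = Im P` and
`R_Λ = Im (1 - P)` are the images of the complementary dual projections `1 - P*` and `P*`.
Expanding by bilinearity,
`R* ⊗ R⁻¹ - 1 = (q - 1) P* ⊗ (1 - P) + (q⁻¹ - 1) (1 - P*) ⊗ P`,
the coefficient of `P* ⊗ P` being `q q⁻¹ - 1 = 0`. The two operators on the right are
orthogonal idempotents with images `R_Λ^⊥ ⊗ R_Λ` and `R_S^⊥ ⊗ R_S`, and both coefficients are
nonzero, so the image of the sum is the sum of the images.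
-/

set_option maxSynthPendingDepth 3

open TensorProduct

/-- For a subspace `p` of `M` and `q` of `N`, the subspace `p ⊗ q` of `M ⊗ N`. -/
noncomputable def tensorSub {k M N : Type*} [Field k] [AddCommGroup M] [Module k M]
    [AddCommGroup N] [Module k N] (p : Submodule k M) (q : Submodule k N) :
    Submodule k (M ⊗[k] N) :=
  LinearMap.range (TensorProduct.mapIncl p q)

/-- The operator `R* ⊗ R⁻¹` on `(V⊗V)* ⊗ (V⊗V)`, where `V*⊗V*` is identified with
`(V⊗V)*`. -/
noncomputable def Rbar {k V : Type*} [Field k] [AddCommGroup V] [Module k V]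
    (R Rinv : Module.End k (V ⊗[k] V)) :
    Module.End k (Module.Dual k (V ⊗[k] V) ⊗[k] (V ⊗[k] V)) :=
  TensorProduct.map R.dualMap Rinv

open LinearMap

lemma tensorSub_range_range {k M N M' N' : Type*} [Field k] [AddCommGroup M] [Module k M]
    [AddCommGroup N] [Module k N] [AddCommGroup M'] [Module k M'] [AddCommGroup N']
    [Module k N'] (f : M' →ₗ[k] M) (g : N' →ₗ[k] N) :
    tensorSub (range f) (range g) = range (map f g) := by
  rw [tensorSub, range_mapIncl, range_map]

section CommRing

variable {R M N : Type*} [CommRing R] [AddCommGroup M] [Module R M] [AddCommGroup N] [Module R N]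

lemma dualMap_one_sub (e : Module.End R M) : (1 - e).dualMap = 1 - e.dualMap := by
  rw [dualMap_def, map_sub, ← dualMap_def, ← dualMap_def]
  rfl

lemma dualMap_one_add_smul (e : Module.End R M) (a : R) :
    (1 + a • e).dualMap = 1 + a • e.dualMap := by
  rw [dualMap_def, map_add, map_smul, ← dualMap_def, ← dualMap_def]
  rfl

lemma IsIdempotentElem.dualMap {e : Module.End R M} (he : IsIdempotentElem e) :
    IsIdempotentElem e.dualMap := by
  rw [IsIdempotentElem, Module.End.mul_eq_comp, dualMap_comp_dualMap, ← Module.End.mul_eq_comp,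
    he.eq]

lemma IsIdempotentElem.tensorMap {E : Module.End R M} {F : Module.End R N}
    (hE : IsIdempotentElem E) (hF : IsIdempotentElem F) :
    IsIdempotentElem (TensorProduct.map E F) := by
  rw [IsIdempotentElem, ← TensorProduct.map_mul, hE.eq, hF.eq]

lemma IsIdempotentElem.dualAnnihilator_range {e : Module.End R M} (he : IsIdempotentElem e) :
    (range e).dualAnnihilator = range (1 - e.dualMap) := by
  rw [← ker_dualMap_eq_dualAnnihilator_range, he.dualMap.ker_eq_range_one_sub]

lemma IsIdempotentElem.one_add_smul_mul_one_add_smul {e : Module.End R M}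
    (he : IsIdempotentElem e) {a b : R} (hab : (1 + a) * (1 + b) = 1) :
    (1 + a • e) * (1 + b • e) = 1 := by
  have hcoeff : a + b + a * b = 0 := by linear_combination hab
  calc (1 + a • e) * (1 + b • e) = 1 + (a + b + a * b) • e := by
        simp only [mul_add, add_mul, one_mul, mul_one, smul_mul_smul_comm, he.eq]
        module
    _ = 1 := by rw [hcoeff, zero_smul, add_zero]

lemma map_one_add_smul_sub_one (E : Module.End R M) (F : Module.End R N) (a b : R) :
    map (1 + a • E) (1 + b • F) - 1 =
      a • map E (1 - F) + b • map (1 - E) F + ((1 + a) * (1 + b) - 1) • map E F := by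
  refine TensorProduct.ext' fun m n => ?_
  simp only [LinearMap.sub_apply, LinearMap.add_apply, LinearMap.smul_apply,
    Module.End.one_apply, map_tmul, tmul_add, tmul_sub, add_tmul, sub_tmul, tmul_smul,
    ← smul_tmul']
  module

end CommRing

section Field

variable {k M N : Type*} [Field k] [AddCommGroup M] [Module k M] [AddCommGroup N] [Module k N]

lemma isIdempotentElem_of_hecke {R : Module.End k M} {q : k}
    (hHecke : (R - q • 1) * (R - 1) = 0) (hq : q ≠ 1) :
    IsIdempotentElem ((q - 1)⁻¹ • (R - 1)) := by
  have hsq : (R - 1) * (R - 1) = (q - 1) • (R - 1) := by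
    rw [show R - q • 1 = (R - 1) - (q - 1) • 1 by module, sub_mul, smul_mul_assoc, one_mul,
      sub_eq_zero] at hHecke
    exact hHecke
  rw [IsIdempotentElem, smul_mul_smul_comm, hsq, smul_smul]
  congr 1
  field_simp [sub_ne_zero.mpr hq]

lemma range_smul_add_smul_of_orthogonal {C D : Module.End k M}
    (hC : IsIdempotentElem C) (hD : IsIdempotentElem D) (hCD : C * D = 0) (hDC : D * C = 0)
    {a b : k} (ha : a ≠ 0) (hb : b ≠ 0) :
    range (a • C + b • D) = range C ⊔ range D := by
  refine le_antisymm ?_ (sup_le ?_ ?_)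
  · exact (range_add_le _ _).trans_eq (by rw [range_smul _ _ ha, range_smul _ _ hb])
  · rintro _ ⟨x, rfl⟩
    exact ⟨a⁻¹ • C x, by simp [← Module.End.mul_apply, hC.eq, hDC, ha]⟩
  · rintro _ ⟨x, rfl⟩
    exact ⟨b⁻¹ • D x, by simp [← Module.End.mul_apply, hD.eq, hCD, hb]⟩

lemma range_map_one_add_smul_sub_one {E : Module.End k M} {F : Module.End k N}
    (hE : IsIdempotentElem E) (hF : IsIdempotentElem F) {a b : k} (ha : a ≠ 0)
    (hab : (1 + a) * (1 + b) = 1) :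
    range (map (1 + a • E) (1 + b • F) - 1) =
      range (map E (1 - F)) ⊔ range (map (1 - E) F) := by
  have hb : b ≠ 0 := by
    rintro rfl
    simp_all
  rw [map_one_add_smul_sub_one, hab, sub_self, zero_smul, add_zero]
  refine range_smul_add_smul_of_orthogonal (hE.tensorMap hF.one_sub) (hE.one_sub.tensorMap hF)
    ?_ ?_ ha hb
  · rw [← TensorProduct.map_mul, hE.mul_one_sub_self, map_zero_left]
  · rw [← TensorProduct.map_mul, hE.one_sub_mul_self, map_zero_left]

end Field

theorem stmt_0_general {k V : Type*} [Field k] [AddCommGroup V] [Module k V]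
    (R Rinv : Module.End k (V ⊗[k] V)) (q : k)
    (hinv₂ : Rinv * R = 1)
    (hHecke : (R - q • 1) * (R - 1) = 0) (hq1 : q ≠ 1) (hq0 : q ≠ 0) :
    tensorSub (Submodule.dualAnnihilator (LinearMap.range (R - 1)))
        (LinearMap.range (R - 1)) ⊔
      tensorSub (Submodule.dualAnnihilator (LinearMap.range (R - q • 1)))
        (LinearMap.range (R - q • 1)) =
    LinearMap.range (Rbar R Rinv - 1) := by
  have hq1' : q - 1 ≠ 0 := sub_ne_zero.mpr hq1
  have hqq : (1 + (q - 1)) * (1 + (q⁻¹ - 1)) = 1 := by simp [hq0]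
  set P := (q - 1)⁻¹ • (R - 1) with hP_def
  have hP : IsIdempotentElem P := isIdempotentElem_of_hecke hHecke hq1
  have hR : R = 1 + (q - 1) • P := by
    rw [hP_def, smul_smul, mul_inv_cancel₀ hq1', one_smul, add_sub_cancel]
  have hRinv : Rinv = 1 + (q⁻¹ - 1) • P :=
    left_inv_eq_right_inv hinv₂ (hR ▸ hP.one_add_smul_mul_one_add_smul hqq)
  have hrange_one : range (R - 1) = range P := by
    rw [hP_def, range_smul _ _ (inv_ne_zero hq1')]
  have hrange_q : range (R - q • 1) = range (1 - P) := by
    rw [show R - q • 1 = (1 - q) • (1 - P) by rw [hR]; module,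
      range_smul _ _ (sub_ne_zero.mpr hq1.symm)]
  rw [hrange_one, hrange_q, hP.dualAnnihilator_range, hP.one_sub.dualAnnihilator_range,
    dualMap_one_sub, sub_sub_cancel, tensorSub_range_range, tensorSub_range_range, Rbar, hR,
    dualMap_one_add_smul, hRinv, range_map_one_add_smul_sub_one hP.dualMap hP hq1' hqq, sup_comm]

theorem stmt_0 {k V : Type*} [Field k] [IsAlgClosed k] [AddCommGroup V] [Module k V]
    [FiniteDimensional k V]
    (R Rinv : Module.End k (V ⊗[k] V)) (q : k)
    (hinv₁ : R * Rinv = 1) (hinv₂ : Rinv * R = 1)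
    (hHecke : (R - q • 1) * (R - 1) = 0) (hq1 : q ≠ 1) (hq0 : q ≠ 0) :
    tensorSub (Submodule.dualAnnihilator (LinearMap.range (R - 1)))
        (LinearMap.range (R - 1)) ⊔
      tensorSub (Submodule.dualAnnihilator (LinearMap.range (R - q • 1)))
        (LinearMap.range (R - q • 1)) =
    LinearMap.range (Rbar R Rinv - 1) :=
  stmt_0_general R Rinv q hinv₂ hHecke hq1 hq0
end

section
/- Let R be an invertible operator on V⊗V satisfying the braid/Yang–Baxter equation R₁₂R₂₃R₁₂ = R₂₃R₁₂R₂₃ on V⊗V⊗V and the Hecke equation (R−q)(R−1)=0 with q(q−1)(q²−q+1) ≠ 0. Then the kernel of P_q := (R₁₂−q)(R₂₃R₁₂−qR₂₃+q²) equals Im(R₁₂−1) + Im(R₂₃−1). -/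
/-!
Write `A = R₁₂`, `B = R₂₃` and `P = (A - q)(BA - qB + q²)`. The Hecke relation for `A` gives
`P (A - 1) = 0`; for `B - 1` one expands and uses the braid relation `BAB = ABA` to reduce
`P (B - 1)` to multiples of `(A - q)(A - 1)` and `(B - q)(B - 1)`. Conversely, the identity
`(A - 1) X + (B - 1) Y = P + (q - 1)(q² - q + 1)` with explicit `X`, `Y` shows that every
vector killed by `P` lies in `Im (A - 1) + Im (B - 1)` as soon as `(q - 1)(q² - q + 1) ≠ 0`.
Both `R₁₂` and `R₂₃` are images of `R` under algebra homomorphisms, so they inherit the Hecke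
relation.
-/

open TensorProduct

variable {k : Type*} [Field k] {V : Type*} [AddCommGroup V] [Module k V]

/-- The operator `R ⊗ id` acting on `V ⊗ V ⊗ V` (associated as `V ⊗ (V ⊗ V)`). -/
noncomputable def R₁₂ (R : Module.End k (V ⊗[k] V)) :
    Module.End k (V ⊗[k] (V ⊗[k] V)) :=
  (TensorProduct.assoc k V V V).toLinearMap ∘ₗ
    TensorProduct.map R LinearMap.id ∘ₗ (TensorProduct.assoc k V V V).symm.toLinearMap

/-- The operator `id ⊗ R` acting on `V ⊗ V ⊗ V`. -/
noncomputable def R₂₃ (R : Module.End k (V ⊗[k] V)) :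
    Module.End k (V ⊗[k] (V ⊗[k] V)) :=
  TensorProduct.map LinearMap.id R

section BraidHecke

variable {E : Type*} [Ring E] [Algebra k E]

def braidHeckeOp (q : k) (A B : E) : E := (A - q • 1) * (B * A - q • B + q ^ 2 • 1)

lemma hecke_map {F : Type*} [Ring F] [Algebra k F] (φ : E →ₐ[k] F) {q : k} {A : E}
    (hA : (A - q • 1) * (A - 1) = 0) : (φ A - q • 1) * (φ A - 1) = 0 := by
  simpa using congrArg φ hA

lemma braidHeckeOp_mul_sub_one_left {q : k} {A : E} (B : E) (hA : (A - q • 1) * (A - 1) = 0) :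
    braidHeckeOp q A B * (A - 1) = 0 := by
  have h : braidHeckeOp q A B * (A - 1)
      = (A - q • 1) * B * ((A - q • 1) * (A - 1)) + q ^ 2 • ((A - q • 1) * (A - 1)) := by
    simp only [braidHeckeOp, mul_add, add_mul, mul_sub, sub_mul, smul_mul_assoc, mul_smul_comm,
      mul_assoc, one_mul, mul_one]
    module
  rw [h, hA, mul_zero, smul_zero, add_zero]

lemma braidHeckeOp_mul_sub_one_right {q : k} {A B : E} (hA : (A - q • 1) * (A - 1) = 0)
    (hB : (B - q • 1) * (B - 1) = 0) (hbraid : A * B * A = B * A * B) :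
    braidHeckeOp q A B * (B - 1) = 0 := by
  have h : braidHeckeOp q A B * (B - 1)
      = (A - q • 1) * (A - 1) * (B * A) + (A - q • 1) * (B * A * B - A * B * A)
        - q • ((A - q • 1) * ((B - q • 1) * (B - 1))) := by
    simp only [braidHeckeOp, mul_add, add_mul, mul_sub, sub_mul, smul_mul_assoc, mul_smul_comm,
      mul_assoc, one_mul, mul_one]
    module
  rw [h, hA, hB, hbraid]
  simp

lemma sub_one_mul_add_sub_one_mul_eq_braidHeckeOp_add (q : k) (A B : E) :
    (A - 1) * (B * A - q • B + (q ^ 2 - q + 1) • 1) + (B - 1) * ((q ^ 2 - q) • 1 + (1 - q) • A)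
      = braidHeckeOp q A B + ((q - 1) * (q ^ 2 - q + 1)) • 1 := by
  simp only [braidHeckeOp, mul_add, mul_sub, sub_mul, smul_mul_assoc, mul_smul_comm,
    one_mul, mul_one]
  module

end BraidHecke

lemma ker_braidHeckeOp {M : Type*} [AddCommGroup M] [Module k M] {q : k} {A B : Module.End k M} (hA : (A - q • 1) * (A - 1) = 0)
    (hB : (B - q • 1) * (B - 1) = 0) (hbraid : A * B * A = B * A * B)
    (hq : (q - 1) * (q ^ 2 - q + 1) ≠ 0) :
    LinearMap.ker (braidHeckeOp q A B) = LinearMap.range (A - 1) ⊔ LinearMap.range (B - 1) := by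
  refine le_antisymm (fun x hx => ?_) (sup_le ?_ ?_)
  · have hx : braidHeckeOp q A B x = 0 := hx
    have hsum := congrArg (· x) (sub_one_mul_add_sub_one_mul_eq_braidHeckeOp_add q A B)
    simp only [LinearMap.add_apply, LinearMap.sub_apply, LinearMap.smul_apply,
      Module.End.mul_apply, Module.End.one_apply, hx, zero_add] at hsum
    have hmem : ((q - 1) * (q ^ 2 - q + 1)) • x
        ∈ LinearMap.range (A - 1) ⊔ LinearMap.range (B - 1) := by
      rw [← hsum]
      exact Submodule.add_mem _ (Submodule.mem_sup_left ⟨_, rfl⟩)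
        (Submodule.mem_sup_right ⟨_, rfl⟩)
    exact (Submodule.smul_mem_iff _ hq).mp hmem
  · exact LinearMap.range_le_ker_iff.mpr (braidHeckeOp_mul_sub_one_left B hA)
  · exact LinearMap.range_le_ker_iff.mpr (braidHeckeOp_mul_sub_one_right hA hB hbraid)

lemma R₁₂_eq_conj_rTensor (R : Module.End k (V ⊗[k] V)) :
    R₁₂ R = ((TensorProduct.assoc k V V V).conjAlgEquiv k).toAlgHom.comp
      (Module.End.rTensorAlgHom k (V ⊗[k] V) V) R :=
  rfl

lemma R₂₃_eq_lTensor (R : Module.End k (V ⊗[k] V)) :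
    R₂₃ R = Module.End.lTensorAlgHom k (V ⊗[k] V) V R :=
  rfl

theorem stmt_1_general (R : Module.End k (V ⊗[k] V)) (q : k)
    (hbraid : R₁₂ R * R₂₃ R * R₁₂ R = R₂₃ R * R₁₂ R * R₂₃ R)
    (hHecke : (R - q • 1) * (R - 1) = 0)
    (hq : q * (q - 1) * (q ^ 2 - q + 1) ≠ 0) :
    LinearMap.ker ((R₁₂ R - q • 1) * (R₂₃ R * R₁₂ R - q • R₂₃ R + q ^ 2 • 1)) =
      LinearMap.range (R₁₂ R - 1) ⊔ LinearMap.range (R₂₃ R - 1) := by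
  have hA : (R₁₂ R - q • 1) * (R₁₂ R - 1) = 0 := by
    rw [R₁₂_eq_conj_rTensor]
    exact hecke_map _ hHecke
  have hB : (R₂₃ R - q • 1) * (R₂₃ R - 1) = 0 := by
    rw [R₂₃_eq_lTensor]
    exact hecke_map _ hHecke
  rw [mul_assoc] at hq
  exact ker_braidHeckeOp hA hB hbraid (right_ne_zero_of_mul hq)

theorem stmt_1 (R : Module.End k (V ⊗[k] V)) (q : k) [FiniteDimensional k V]
    (hR : IsUnit R)
    (hbraid : R₁₂ R * R₂₃ R * R₁₂ R = R₂₃ R * R₁₂ R * R₂₃ R)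
    (hHecke : (R - q • 1) * (R - 1) = 0)
    (hq : q * (q - 1) * (q ^ 2 - q + 1) ≠ 0) :
    LinearMap.ker ((R₁₂ R - q • 1) * (R₂₃ R * R₁₂ R - q • R₂₃ R + q ^ 2 • 1)) =
      LinearMap.range (R₁₂ R - 1) ⊔ LinearMap.range (R₂₃ R - 1) :=
  stmt_1_general R q hbraid hHecke hq
end

section
/- Let R be an operator on V⊗V satisfying the braid equation R₁₂R₂₃R₁₂ = R₂₃R₁₂R₂₃. Then for α any scalar, the operator P_α = (R₁₂−α)(R₂₃R₁₂−αR₂₃+α²) satisfies P_α = (R₂₃−α)(R₁₂R₂₃−αR₁₂+α²) = (R₂₃R₁₂−αR₁₂+α²)(R₂₃−α) = (R₁₂R₂₃−αR₂₃+α²)(R₁₂−α). -/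
/-! Each of the four products expands to `A B A - α (A B + B A) + α² (A + B) - α³`, up to
replacing `A B A` by `B A B`; the braid relation identifies the two. -/

open TensorProduct

variable {k : Type*} [Field k] {V : Type*} [AddCommGroup V] [Module k V]

section BraidCubic

variable {K S : Type*} [CommRing K] [Ring S] [Algebra K S]

theorem sub_smul_one_mul_expand (A B : S) (α : K) :
    (A - α • 1) * (B * A - α • B + α ^ 2 • 1) =
      A * B * A - α • (A * B + B * A) + α ^ 2 • (A + B) - α ^ 3 • 1 := by
  simp only [mul_add, mul_sub, sub_mul, smul_mul_assoc, mul_smul_comm, mul_one, one_mul,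
    mul_assoc]
  module

theorem mul_sub_smul_one_expand (A B : S) (α : K) :
    (A * B - α • B + α ^ 2 • 1) * (A - α • 1) =
      A * B * A - α • (A * B + B * A) + α ^ 2 • (A + B) - α ^ 3 • 1 := by
  simp only [add_mul, mul_sub, sub_mul, smul_mul_assoc, mul_smul_comm, mul_one, one_mul,
    mul_assoc]
  module

theorem braid_cubic_eq {A B : S} (h : A * B * A = B * A * B) (α : K) :
    (A - α • 1) * (B * A - α • B + α ^ 2 • 1) = (B - α • 1) * (A * B - α • A + α ^ 2 • 1) ∧
    (A - α • 1) * (B * A - α • B + α ^ 2 • 1) = (B * A - α • A + α ^ 2 • 1) * (B - α • 1) ∧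
    (A - α • 1) * (B * A - α • B + α ^ 2 • 1) = (A * B - α • B + α ^ 2 • 1) * (A - α • 1) := by
  simp only [sub_smul_one_mul_expand, mul_sub_smul_one_expand, h, add_comm (B * A),
    add_comm B, and_self]

end BraidCubic

theorem stmt_2 (R : Module.End k (V ⊗[k] V))
    (hbraid : R₁₂ R * R₂₃ R * R₁₂ R = R₂₃ R * R₁₂ R * R₂₃ R) (α : k) :
    (R₁₂ R - α • 1) * (R₂₃ R * R₁₂ R - α • R₂₃ R + α ^ 2 • 1) =
        (R₂₃ R - α • 1) * (R₁₂ R * R₂₃ R - α • R₁₂ R + α ^ 2 • 1) ∧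
      (R₁₂ R - α • 1) * (R₂₃ R * R₁₂ R - α • R₂₃ R + α ^ 2 • 1) =
        (R₂₃ R * R₁₂ R - α • R₁₂ R + α ^ 2 • 1) * (R₂₃ R - α • 1) ∧
      (R₁₂ R - α • 1) * (R₂₃ R * R₁₂ R - α • R₂₃ R + α ^ 2 • 1) =
        (R₁₂ R * R₂₃ R - α • R₂₃ R + α ^ 2 • 1) * (R₁₂ R - α • 1) :=
  braid_cubic_eq hbraid α
end

section
/- Let R be an operator on V⊗V satisfying the braid equation R₁₂R₂₃R₁₂ = R₂₃R₁₂R₂₃, and set R₁₃ := R₁₂R₂₃R₁₂. Define P_Γ = (R₁₂−q)(R₂₃−1) and P_L = (R₂₃−q)(R₁₂−1) on V⊗V⊗V. Then R₁₃ P_L = P_Γ R₁₃. -/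
/-! The braid relation makes `c = a b a = b a b` swap `a` and `b` under conjugation:
`c b = a c` and `c a = b c`. Hence `c` carries every product of polynomials in `b` and `a`
to the same product with `a` and `b` exchanged. -/

open TensorProduct

variable {k : Type*} [Field k] {V : Type*} [AddCommGroup V] [Module k V]

section Braid

variable {A : Type*}

theorem semiconjBy_braid_left [Semigroup A] {a b : A} (h : a * b * a = b * a * b) :
    SemiconjBy (a * b * a) b a := by
  unfold SemiconjBy
  conv_rhs => rw [h]
  simp only [mul_assoc]

theorem semiconjBy_braid_right [Semigroup A] {a b : A} (h : a * b * a = b * a * b) :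
    SemiconjBy (a * b * a) a b := by
  unfold SemiconjBy
  conv_lhs => rw [h]
  simp only [mul_assoc]

theorem braid_mul_sub_smul_one_mul_sub_one {S : Type*} [Ring A] [SMul S A]
    [SMulCommClass S A A] [IsScalarTower S A A] {a b : A} (h : a * b * a = b * a * b) (q : S) :
    (a * b * a) * ((b - q • 1) * (a - 1)) = ((a - q • 1) * (b - 1)) * (a * b * a) :=
  ((semiconjBy_braid_left h).sub_right ((Commute.one_right _).smul_right q)).mul_right
    ((semiconjBy_braid_right h).sub_right (Commute.one_right _))

end Braid

theorem stmt_3 (R : Module.End k (V ⊗[k] V)) (q : k)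
    (hbraid : R₁₂ R * R₂₃ R * R₁₂ R = R₂₃ R * R₁₂ R * R₂₃ R) :
    (R₁₂ R * R₂₃ R * R₁₂ R) * ((R₂₃ R - q • 1) * (R₁₂ R - 1)) =
      ((R₁₂ R - q • 1) * (R₂₃ R - 1)) * (R₁₂ R * R₂₃ R * R₁₂ R) :=
  braid_mul_sub_smul_one_mul_sub_one hbraid q
end

section
/- (Sudbery's decomposition) Let R be an operator on V⊗V satisfying the braid equation and the Hecke equation (R−q)(R−1)=0 with q(q−1)(q²−q+1) ≠ 0. Define on V⊗V⊗V the operators P₁ = (R₁₂−1)(R₂₃R₁₂−R₂₃+1), P_q = (R₁₂−q)(R₂₃R₁₂−qR₂₃+q²), P_Γ = (R₁₂−q)(R₂₃−1), P_L = (R₂₃−q)(R₁₂−1). Then there exist nonzero constants c_α (α ∈ {1,q,Γ,L}) such that c_α P_α are idempotent, and V⊗V⊗V = Im P₁ ⊕ Im P_q ⊕ Im P_Γ ⊕ Im P_L. -/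
open TensorProduct

section HeckeAlgebra

variable {K : Type*} [Field K] {S : Type*} [Ring S] [Algebra K S]

set_option maxHeartbeats 3200000 in
/-- All the Hecke-algebra identities needed for Sudbery's decomposition,
packaged abstractly for a `K`-algebra `S`. -/

lemma hecke_package (q : K) (a b : S)
    (ha : a * a = (q + 1) • a - q • 1) (hb : b * b = (q + 1) • b - q • 1)
    (hbr : a * b * a = b * a * b)
    (hq2 : q - 1 ≠ 0) (hq3 : q ^ 2 - q + 1 ≠ 0) :
    ∃ c : Fin 4 → K, (∀ i, c i ≠ 0) ∧
      (∀ i, IsIdempotentElem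
        (c i • ![(a - 1) * (b * a - b + 1),
                 (a - q • 1) * (b * a - q • b + q ^ 2 • 1),
                 (a - q • 1) * (b - 1),
                 (b - q • 1) * (a - 1)] i)) ∧
      (∀ i j, i ≠ j →
        (c i • ![(a - 1) * (b * a - b + 1),
                 (a - q • 1) * (b * a - q • b + q ^ 2 • 1),
                 (a - q • 1) * (b - 1),
                 (b - q • 1) * (a - 1)] i) *
        (c j • ![(a - 1) * (b * a - b + 1),
                 (a - q • 1) * (b * a - q • b + q ^ 2 • 1),
                 (a - q • 1) * (b - 1),
                 (b - q • 1) * (a - 1)] j) = 0) ∧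
      ((c 0 • ((a - 1) * (b * a - b + 1))) +
       (c 1 • ((a - q • 1) * (b * a - q • b + q ^ 2 • 1))) +
       (c 2 • ((a - q • 1) * (b - 1))) +
       (c 3 • ((b - q • 1) * (a - 1))) = 1) := by
  have hd0 : (q - 1) * (q ^ 2 - q + 1) ≠ 0 := mul_ne_zero hq2 hq3
  have haa : ∀ x, a * (a * x) = (q + 1) • (a * x) - q • x := fun x => by
    rw [← mul_assoc, ha, sub_mul, smul_mul_assoc, smul_mul_assoc, one_mul]
  have hbb : ∀ x, b * (b * x) = (q + 1) • (b * x) - q • x := fun x => by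
    rw [← mul_assoc, hb, sub_mul, smul_mul_assoc, smul_mul_assoc, one_mul]
  have hbab : ∀ x, b * (a * (b * x)) = a * (b * (a * x)) := fun x => by
    rw [← mul_assoc, ← mul_assoc, ← hbr, mul_assoc, mul_assoc]
  have hbab0 : b * (a * b) = a * (b * a) := by rw [← mul_assoc, ← hbr, mul_assoc]
  set P0 := (a - 1) * (b * a - b + 1) with hP0
  set P1 := (a - q • 1) * (b * a - q • b + q ^ 2 • 1) with hP1
  set P2 := (a - q • 1) * (b - 1) with hP2
  set P3 := (b - q • 1) * (a - 1) with hP3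
  have hsq0 : P0 * P0 = ((q - 1) * (q ^ 2 - q + 1)) • P0 := by
    rw [hP0]
    simp only [mul_sub, sub_mul, mul_add, add_mul, mul_one, one_mul, smul_mul_assoc,
      mul_smul_comm, mul_assoc, haa, hbb, hbab, hbab0, ha, hb, smul_sub, smul_add, smul_smul]
    module
  have hsq1 : P1 * P1 = (-((q - 1) * (q ^ 2 - q + 1))) • P1 := by
    rw [hP1]
    simp only [mul_sub, sub_mul, mul_add, add_mul, mul_one, one_mul, smul_mul_assoc,
      mul_smul_comm, mul_assoc, haa, hbb, hbab, hbab0, ha, hb, smul_sub, smul_add, smul_smul]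
    module
  have hsq2 : P2 * P2 = (-(q ^ 2 - q + 1)) • P2 := by
    rw [hP2]
    simp only [mul_sub, sub_mul, mul_add, add_mul, mul_one, one_mul, smul_mul_assoc,
      mul_smul_comm, mul_assoc, haa, hbb, hbab, hbab0, ha, hb, smul_sub, smul_add, smul_smul]
    module
  have hsq3 : P3 * P3 = (-(q ^ 2 - q + 1)) • P3 := by
    rw [hP3]
    simp only [mul_sub, sub_mul, mul_add, add_mul, mul_one, one_mul, smul_mul_assoc,
      mul_smul_comm, mul_assoc, haa, hbb, hbab, hbab0, ha, hb, smul_sub, smul_add, smul_smul]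
    module
  have h01 : P0 * P1 = 0 := by
    rw [hP0, hP1]
    simp only [mul_sub, sub_mul, mul_add, add_mul, mul_one, one_mul, smul_mul_assoc,
      mul_smul_comm, mul_assoc, haa, hbb, hbab, hbab0, ha, hb, smul_sub, smul_add, smul_smul]
    module
  have h02 : P0 * P2 = 0 := by
    rw [hP0, hP2]
    simp only [mul_sub, sub_mul, mul_add, add_mul, mul_one, one_mul, smul_mul_assoc,
      mul_smul_comm, mul_assoc, haa, hbb, hbab, hbab0, ha, hb, smul_sub, smul_add, smul_smul]
    module
  have h03 : P0 * P3 = 0 := by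
    rw [hP0, hP3]
    simp only [mul_sub, sub_mul, mul_add, add_mul, mul_one, one_mul, smul_mul_assoc,
      mul_smul_comm, mul_assoc, haa, hbb, hbab, hbab0, ha, hb, smul_sub, smul_add, smul_smul]
    module
  have h10 : P1 * P0 = 0 := by
    rw [hP0, hP1]
    simp only [mul_sub, sub_mul, mul_add, add_mul, mul_one, one_mul, smul_mul_assoc,
      mul_smul_comm, mul_assoc, haa, hbb, hbab, hbab0, ha, hb, smul_sub, smul_add, smul_smul]
    module
  have h12 : P1 * P2 = 0 := by
    rw [hP1, hP2]
    simp only [mul_sub, sub_mul, mul_add, add_mul, mul_one, one_mul, smul_mul_assoc,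
      mul_smul_comm, mul_assoc, haa, hbb, hbab, hbab0, ha, hb, smul_sub, smul_add, smul_smul]
    module
  have h13 : P1 * P3 = 0 := by
    rw [hP1, hP3]
    simp only [mul_sub, sub_mul, mul_add, add_mul, mul_one, one_mul, smul_mul_assoc,
      mul_smul_comm, mul_assoc, haa, hbb, hbab, hbab0, ha, hb, smul_sub, smul_add, smul_smul]
    module
  have h20 : P2 * P0 = 0 := by
    rw [hP0, hP2]
    simp only [mul_sub, sub_mul, mul_add, add_mul, mul_one, one_mul, smul_mul_assoc,
      mul_smul_comm, mul_assoc, haa, hbb, hbab, hbab0, ha, hb, smul_sub, smul_add, smul_smul]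
    module
  have h21 : P2 * P1 = 0 := by
    rw [hP1, hP2]
    simp only [mul_sub, sub_mul, mul_add, add_mul, mul_one, one_mul, smul_mul_assoc,
      mul_smul_comm, mul_assoc, haa, hbb, hbab, hbab0, ha, hb, smul_sub, smul_add, smul_smul]
    module
  have h23 : P2 * P3 = 0 := by
    rw [hP2, hP3]
    simp only [mul_sub, sub_mul, mul_add, add_mul, mul_one, one_mul, smul_mul_assoc,
      mul_smul_comm, mul_assoc, haa, hbb, hbab, hbab0, ha, hb, smul_sub, smul_add, smul_smul]
    module
  have h30 : P3 * P0 = 0 := by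
    rw [hP0, hP3]
    simp only [mul_sub, sub_mul, mul_add, add_mul, mul_one, one_mul, smul_mul_assoc,
      mul_smul_comm, mul_assoc, haa, hbb, hbab, hbab0, ha, hb, smul_sub, smul_add, smul_smul]
    module
  have h31 : P3 * P1 = 0 := by
    rw [hP1, hP3]
    simp only [mul_sub, sub_mul, mul_add, add_mul, mul_one, one_mul, smul_mul_assoc,
      mul_smul_comm, mul_assoc, haa, hbb, hbab, hbab0, ha, hb, smul_sub, smul_add, smul_smul]
    module
  have h32 : P3 * P2 = 0 := by
    rw [hP2, hP3]
    simp only [mul_sub, sub_mul, mul_add, add_mul, mul_one, one_mul, smul_mul_assoc,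
      mul_smul_comm, mul_assoc, haa, hbb, hbab, hbab0, ha, hb, smul_sub, smul_add, smul_smul]
    module
  have hsum : P0 - P1 - (q - 1) • P2 - (q - 1) • P3 = ((q - 1) * (q ^ 2 - q + 1)) • 1 := by
    rw [hP0, hP1, hP2, hP3]
    simp only [mul_sub, sub_mul, mul_add, add_mul, mul_one, one_mul, smul_mul_assoc,
      mul_smul_comm, mul_assoc, haa, hbb, hbab, hbab0, ha, hb, smul_sub, smul_add, smul_smul]
    module
  refine ⟨![((q - 1) * (q ^ 2 - q + 1))⁻¹, -((q - 1) * (q ^ 2 - q + 1))⁻¹,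
      -(q ^ 2 - q + 1)⁻¹, -(q ^ 2 - q + 1)⁻¹], ?_, ?_, ?_, ?_⟩
  · intro i
    fin_cases i
    · exact inv_ne_zero hd0
    · exact neg_ne_zero.mpr (inv_ne_zero hd0)
    · exact neg_ne_zero.mpr (inv_ne_zero hq3)
    · exact neg_ne_zero.mpr (inv_ne_zero hq3)
  · intro i
    fin_cases i
    · show ((((q - 1) * (q ^ 2 - q + 1))⁻¹) • P0) * ((((q - 1) * (q ^ 2 - q + 1))⁻¹) • P0) = (((q - 1) * (q ^ 2 - q + 1))⁻¹) • P0
      rw [smul_mul_smul_comm, hsq0, smul_smul]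
      congr 1
      field_simp
      all_goals ring
    · show ((-((q - 1) * (q ^ 2 - q + 1))⁻¹) • P1) * ((-((q - 1) * (q ^ 2 - q + 1))⁻¹) • P1) = (-((q - 1) * (q ^ 2 - q + 1))⁻¹) • P1
      rw [smul_mul_smul_comm, hsq1, smul_smul]
      congr 1
      field_simp
      all_goals ring
    · show ((-(q ^ 2 - q + 1)⁻¹) • P2) * ((-(q ^ 2 - q + 1)⁻¹) • P2) = (-(q ^ 2 - q + 1)⁻¹) • P2
      rw [smul_mul_smul_comm, hsq2, smul_smul]
      congr 1
      field_simp
      all_goals ring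
    · show ((-(q ^ 2 - q + 1)⁻¹) • P3) * ((-(q ^ 2 - q + 1)⁻¹) • P3) = (-(q ^ 2 - q + 1)⁻¹) • P3
      rw [smul_mul_smul_comm, hsq3, smul_smul]
      congr 1
      field_simp
      all_goals ring
  · intro i j hij
    fin_cases i <;> fin_cases j
    · exact absurd rfl hij
    · show ((((q - 1) * (q ^ 2 - q + 1))⁻¹) • P0) * ((-((q - 1) * (q ^ 2 - q + 1))⁻¹) • P1) = 0
      rw [smul_mul_smul_comm, h01, smul_zero]
    · show ((((q - 1) * (q ^ 2 - q + 1))⁻¹) • P0) * ((-(q ^ 2 - q + 1)⁻¹) • P2) = 0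
      rw [smul_mul_smul_comm, h02, smul_zero]
    · show ((((q - 1) * (q ^ 2 - q + 1))⁻¹) • P0) * ((-(q ^ 2 - q + 1)⁻¹) • P3) = 0
      rw [smul_mul_smul_comm, h03, smul_zero]
    · show ((-((q - 1) * (q ^ 2 - q + 1))⁻¹) • P1) * ((((q - 1) * (q ^ 2 - q + 1))⁻¹) • P0) = 0
      rw [smul_mul_smul_comm, h10, smul_zero]
    · exact absurd rfl hij
    · show ((-((q - 1) * (q ^ 2 - q + 1))⁻¹) • P1) * ((-(q ^ 2 - q + 1)⁻¹) • P2) = 0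
      rw [smul_mul_smul_comm, h12, smul_zero]
    · show ((-((q - 1) * (q ^ 2 - q + 1))⁻¹) • P1) * ((-(q ^ 2 - q + 1)⁻¹) • P3) = 0
      rw [smul_mul_smul_comm, h13, smul_zero]
    · show ((-(q ^ 2 - q + 1)⁻¹) • P2) * ((((q - 1) * (q ^ 2 - q + 1))⁻¹) • P0) = 0
      rw [smul_mul_smul_comm, h20, smul_zero]
    · show ((-(q ^ 2 - q + 1)⁻¹) • P2) * ((-((q - 1) * (q ^ 2 - q + 1))⁻¹) • P1) = 0
      rw [smul_mul_smul_comm, h21, smul_zero]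
    · exact absurd rfl hij
    · show ((-(q ^ 2 - q + 1)⁻¹) • P2) * ((-(q ^ 2 - q + 1)⁻¹) • P3) = 0
      rw [smul_mul_smul_comm, h23, smul_zero]
    · show ((-(q ^ 2 - q + 1)⁻¹) • P3) * ((((q - 1) * (q ^ 2 - q + 1))⁻¹) • P0) = 0
      rw [smul_mul_smul_comm, h30, smul_zero]
    · show ((-(q ^ 2 - q + 1)⁻¹) • P3) * ((-((q - 1) * (q ^ 2 - q + 1))⁻¹) • P1) = 0
      rw [smul_mul_smul_comm, h31, smul_zero]
    · show ((-(q ^ 2 - q + 1)⁻¹) • P3) * ((-(q ^ 2 - q + 1)⁻¹) • P2) = 0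
      rw [smul_mul_smul_comm, h32, smul_zero]
    · exact absurd rfl hij
  · simp only [Matrix.cons_val_zero, Matrix.cons_val_one, Matrix.cons_val_two,
      Matrix.cons_val_three, Matrix.head_cons, Matrix.tail_cons]
    have e2 : -(q ^ 2 - q + 1)⁻¹ = -(((q - 1) * (q ^ 2 - q + 1))⁻¹ * (q - 1)) := by
      field_simp
      all_goals ring
    calc ((q - 1) * (q ^ 2 - q + 1))⁻¹ • P0 + (-((q - 1) * (q ^ 2 - q + 1))⁻¹) • P1 +
          (-(q ^ 2 - q + 1)⁻¹) • P2 + (-(q ^ 2 - q + 1)⁻¹) • P3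
        = ((q - 1) * (q ^ 2 - q + 1))⁻¹ • (P0 - P1 - (q - 1) • P2 - (q - 1) • P3) := by
          rw [e2, smul_sub, smul_sub, smul_sub, smul_smul, smul_smul]
          module
      _ = ((q - 1) * (q ^ 2 - q + 1))⁻¹ • (((q - 1) * (q ^ 2 - q + 1)) • (1 : S)) := by
          rw [hsum]
      _ = 1 := by rw [smul_smul, inv_mul_cancel₀ hd0, one_smul]

/-- Quadratic form of the Hecke relation. -/
lemma hecke_sq (q : K) (r : S) (h : (r - q • 1) * (r - 1) = 0) :
    r * r = (q + 1) • r - q • 1 := by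
  have e1 : (r - q • 1) * (r - 1) = r * r - (q + 1) • r + q • 1 := by
    simp only [sub_mul, mul_sub, smul_mul_assoc, one_mul, mul_one]
    module
  rw [e1] at h
  rw [← sub_eq_zero, ← h]
  module

end HeckeAlgebra

variable {k : Type*} [Field k] {V : Type*} [AddCommGroup V] [Module k V]

lemma R12_sq (R : Module.End k (V ⊗[k] V)) (q : k)
    (hRR : R * R = (q + 1) • R - q • 1) :
    R₁₂ R * R₁₂ R = (q + 1) • R₁₂ R - q • 1 := by
  have hconj : R₁₂ R = (TensorProduct.assoc k V V V).conj (TensorProduct.map R LinearMap.id) := by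
    rw [LinearEquiv.conj_apply, R₁₂, LinearMap.comp_assoc]
  have h1 : TensorProduct.map R LinearMap.id ∘ₗ TensorProduct.map R LinearMap.id
      = TensorProduct.map (R * R) (LinearMap.id : Module.End k V) :=
    (TensorProduct.map_comp R LinearMap.id R LinearMap.id).symm
  have h2 : TensorProduct.map (1 : Module.End k (V ⊗[k] V)) (LinearMap.id : Module.End k V)
      = 1 :=
    TensorProduct.map_id
  rw [hconj, Module.End.mul_eq_comp, ← LinearEquiv.conj_comp, h1, hRR,
    show (q + 1) • R - q • (1 : Module.End k (V ⊗[k] V)) = (q + 1) • R + (-q) • 1 by module,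
    TensorProduct.map_add_left, TensorProduct.map_smul_left, TensorProduct.map_smul_left,
    map_add, map_smul, map_smul, h2]
  rw [show (TensorProduct.assoc k V V V).conj 1 = 1 from (TensorProduct.assoc k V V V).conj_id]
  module

lemma R23_sq (R : Module.End k (V ⊗[k] V)) (q : k)
    (hRR : R * R = (q + 1) • R - q • 1) :
    R₂₃ R * R₂₃ R = (q + 1) • R₂₃ R - q • 1 := by
  have h1 : R₂₃ R * R₂₃ R = TensorProduct.map LinearMap.id (R * R) :=
    (TensorProduct.map_comp LinearMap.id R LinearMap.id R).symm
  have h2 : TensorProduct.map (LinearMap.id : Module.End k V) (1 : Module.End k (V ⊗[k] V))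
      = 1 :=
    TensorProduct.map_id
  rw [h1, hRR,
    show (q + 1) • R - q • (1 : Module.End k (V ⊗[k] V)) = (q + 1) • R + (-q) • 1 by module,
    TensorProduct.map_add_right, TensorProduct.map_smul_right, TensorProduct.map_smul_right, h2,
    R₂₃]
  module

theorem stmt_4 (R : Module.End k (V ⊗[k] V)) (q : k) [FiniteDimensional k V]
    (hbraid : R₁₂ R * R₂₃ R * R₁₂ R = R₂₃ R * R₁₂ R * R₂₃ R)
    (hHecke : (R - q • 1) * (R - 1) = 0)
    (hq : q * (q - 1) * (q ^ 2 - q + 1) ≠ 0) :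
    ∃ c : Fin 4 → k, (∀ i, c i ≠ 0) ∧
      (∀ i, IsIdempotentElem
        (c i • ![(R₁₂ R - 1) * (R₂₃ R * R₁₂ R - R₂₃ R + 1),
                 (R₁₂ R - q • 1) * (R₂₃ R * R₁₂ R - q • R₂₃ R + q ^ 2 • 1),
                 (R₁₂ R - q • 1) * (R₂₃ R - 1),
                 (R₂₃ R - q • 1) * (R₁₂ R - 1)] i)) ∧
      DirectSum.IsInternal (fun i : Fin 4 => LinearMap.range
        (![(R₁₂ R - 1) * (R₂₃ R * R₁₂ R - R₂₃ R + 1),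
           (R₁₂ R - q • 1) * (R₂₃ R * R₁₂ R - q • R₂₃ R + q ^ 2 • 1),
           (R₁₂ R - q • 1) * (R₂₃ R - 1),
           (R₂₃ R - q • 1) * (R₁₂ R - 1)] i)) := by
  have hq2 : q - 1 ≠ 0 := fun h => hq (by rw [h]; ring)
  have hq3 : q ^ 2 - q + 1 ≠ 0 := fun h => hq (by rw [h, mul_zero])
  have hRR : R * R = (q + 1) • R - q • 1 := hecke_sq q R hHecke
  obtain ⟨c, hc0, hcId, hcOrth, hcSum⟩ :=
    hecke_package q (R₁₂ R) (R₂₃ R) (R12_sq R q hRR) (R23_sq R q hRR) hbraid hq2 hq3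
  refine ⟨c, hc0, hcId, ?_⟩
  set M := ![(R₁₂ R - 1) * (R₂₃ R * R₁₂ R - R₂₃ R + 1),
             (R₁₂ R - q • 1) * (R₂₃ R * R₁₂ R - q • R₂₃ R + q ^ 2 • 1),
             (R₁₂ R - q • 1) * (R₂₃ R - 1),
             (R₂₃ R - q • 1) * (R₁₂ R - 1)] with hM
  have hre : ∀ i, LinearMap.range (M i) = LinearMap.range (c i • M i) :=
    fun i => (LinearMap.range_smul (M i) (c i) (hc0 i)).symm
  rw [DirectSum.isInternal_submodule_iff_iSupIndep_and_iSup_eq_top]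
  constructor
  · rw [iSupIndep_def]
    intro i
    rw [Submodule.disjoint_def]
    intro x hxi hxo
    have hker : (⨆ j, ⨆ _ : j ≠ i, LinearMap.range (M j)) ≤ LinearMap.ker (c i • M i) := by
      refine iSup_le fun j => iSup_le fun hji => ?_
      rw [hre j]
      exact LinearMap.range_le_ker_iff.mpr (hcOrth i j (Ne.symm hji))
    have h2 : (c i • M i) x = 0 := hker hxo
    rw [hre i] at hxi
    obtain ⟨y, hy⟩ := hxi
    have h1 : (c i • M i) x = x := by
      rw [← hy, ← Module.End.mul_apply, hcId i]
    rw [← h1, h2]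
  · rw [eq_top_iff]
    intro x _
    have hx : x = (c 0 • M 0) x + (c 1 • M 1) x + (c 2 • M 2) x + (c 3 • M 3) x := by
      rw [← LinearMap.add_apply, ← LinearMap.add_apply, ← LinearMap.add_apply]
      rw [show c 0 • M 0 + c 1 • M 1 + c 2 • M 2 + c 3 • M 3 = 1 from hcSum,
        Module.End.one_apply]
    rw [hx]
    have mem : ∀ j : Fin 4, (c j • M j) x ∈ (⨆ i, LinearMap.range (M i)) := fun j =>
      Submodule.mem_iSup_of_mem j (by rw [hre j]; exact ⟨x, rfl⟩)
    exact add_mem (add_mem (add_mem (mem 0) (mem 1)) (mem 2)) (mem 3)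
end

section
/- Let R be a braid-equation operator on V⊗V with (R−q)(R−1)=0, q(q−1)(q²−q+1)≠0. Let Π_Γ = Im((R₁₂−q)(R₂₃−1)). For x ∈ Π_Γ set y = q^{-1}R₁₃x where R₁₃ = R₁₂R₂₃R₁₂. Then R₁₂x = x, R₂₃x = qx + y, R₁₂y = −qx + qy, and R₂₃y = y; in particular y ∈ Im((R₂₃−q)(R₁₂−1)). -/
/-!
Write `A = R₁₂`, `B = R₂₃`. An element of `Im((A - q)(B - 1))` has the form `x = (A - q) w` with
`B w = q w`, because `(B - q)(B - 1) = 0`; likewise `(A - 1)(A - q) = 0` gives `A x = x`. The braid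
relation turns `A B A w` into `B A B w = q B A w`, which yields `q B x = q² x + A B x`, i.e.
`B x = q x + y`. Then `A y = -q x + q y` comes from the Hecke relation for `A`, `B y = y` from the
braid relation and `A x = x`, and these three relations give `(B - q)(A - 1) y = -(q² - q + 1) y`.
-/

open TensorProduct

variable {k : Type*} [Field k] {V : Type*} [AddCommGroup V] [Module k V]

theorem AlgHom.map_hecke {A B : Type*} [Ring A] [Algebra k A] [Ring B] [Algebra k B]
    (φ : A →ₐ[k] B) {q : k} {a : A} (h : (a - q • 1) * (a - 1) = 0) :
    (φ a - q • 1) * (φ a - 1) = 0 := by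
  simpa using congrArg φ h

theorem R₁₂_hecke {R : Module.End k (V ⊗[k] V)} {q : k} (h : (R - q • 1) * (R - 1) = 0) :
    (R₁₂ R - q • 1) * (R₁₂ R - 1) = 0 :=
  (((TensorProduct.assoc k V V V).conjAlgEquiv k).toAlgHom.comp
    (Module.End.rTensorAlgHom k (V ⊗[k] V) V)).map_hecke h

theorem R₂₃_hecke {R : Module.End k (V ⊗[k] V)} {q : k} (h : (R - q • 1) * (R - 1) = 0) :
    (R₂₃ R - q • 1) * (R₂₃ R - 1) = 0 :=
  (Module.End.lTensorAlgHom k (V ⊗[k] V) V).map_hecke h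

namespace Module.End

variable {M : Type*} [AddCommGroup M] [Module k M] {q : k} {A B : Module.End k M} {x y : M}

theorem apply_apply_of_hecke (hA : (A - q • 1) * (A - 1) = 0) (v : M) :
    A (A v) = (q + 1) • A v - q • v := by
  have := congr($hA v)
  simp only [mul_apply, LinearMap.sub_apply, LinearMap.smul_apply, one_apply,
    LinearMap.zero_apply, map_sub] at this
  linear_combination (norm := module) this

theorem apply_eq_self_of_mem_range_hecke (hA : (A - q • 1) * (A - 1) = 0)
    (hx : x ∈ LinearMap.range (A - q • 1)) : A x = x := by
  obtain ⟨z, rfl⟩ := hx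
  simp only [LinearMap.sub_apply, LinearMap.smul_apply, one_apply, map_sub, map_smul,
    apply_apply_of_hecke hA]
  module

theorem apply_eq_smul_of_mem_range_hecke (hA : (A - q • 1) * (A - 1) = 0)
    (hx : x ∈ LinearMap.range (A - 1)) : A x = q • x := by
  obtain ⟨z, rfl⟩ := hx
  have := congr($hA z)
  simp only [mul_apply, LinearMap.sub_apply, LinearMap.smul_apply, one_apply,
    LinearMap.zero_apply] at this
  exact sub_eq_zero.mp this

theorem apply_apply_apply_of_braid (hbraid : A * B * A = B * A * B) (hAx : A x = x) :
    B (A (B x)) = A (B x) := by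
  simpa [hAx] using congr($hbraid x).symm

theorem smul_apply_eq_of_braid (hB : (B - q • 1) * (B - 1) = 0)
    (hbraid : A * B * A = B * A * B) (hx : x ∈ LinearMap.range ((A - q • 1) * (B - 1))) :
    q • B x = q ^ 2 • x + A (B x) := by
  obtain ⟨z, rfl⟩ := hx
  have hw : B ((B - 1) z) = q • (B - 1) z := apply_eq_smul_of_mem_range_hecke hB ⟨z, rfl⟩
  rw [mul_apply]
  generalize (B - 1) z = w at hw ⊢
  have hbraid_w : A (B (A w)) = B (A (B w)) := congr($hbraid w)
  simp only [LinearMap.sub_apply, LinearMap.smul_apply, one_apply, map_sub, map_smul, hw]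
    at hbraid_w ⊢
  linear_combination (norm := module) -hbraid_w

theorem mem_range_of_hecke_relations (hq : q ^ 2 - q + 1 ≠ 0) (hBx : B x = q • x + y)
    (hAy : A y = -(q • x) + q • y) (hBy : B y = y) :
    y ∈ LinearMap.range ((B - q • 1) * (A - 1)) := by
  refine ⟨(-(q ^ 2 - q + 1)⁻¹) • y, ?_⟩
  have key : ((B - q • 1) * (A - 1)) y = -(q ^ 2 - q + 1) • y := by
    simp only [mul_apply, LinearMap.sub_apply, LinearMap.smul_apply, one_apply, map_sub,
      map_add, map_neg, map_smul, hAy, hBx, hBy]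
    module
  rw [map_smul, key, smul_smul, neg_mul_neg, inv_mul_cancel₀ hq, one_smul]

theorem hecke_braid_relations (hA : (A - q • 1) * (A - 1) = 0)
    (hB : (B - q • 1) * (B - 1) = 0) (hbraid : A * B * A = B * A * B) (hq₀ : q ≠ 0)
    (hq : q ^ 2 - q + 1 ≠ 0) (hx : x ∈ LinearMap.range ((A - q • 1) * (B - 1))) :
    A x = x ∧ B x = q • x + q⁻¹ • (A * B * A) x ∧
      A (q⁻¹ • (A * B * A) x) = -(q • x) + q • (q⁻¹ • (A * B * A) x) ∧
      B (q⁻¹ • (A * B * A) x) = q⁻¹ • (A * B * A) x ∧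
      q⁻¹ • (A * B * A) x ∈ LinearMap.range ((B - q • 1) * (A - 1)) := by
  have hAx : A x = x := apply_eq_self_of_mem_range_hecke hA (LinearMap.range_comp_le_range _ _ hx)
  have hqB : q • B x = q ^ 2 • x + A (B x) := smul_apply_eq_of_braid hB hbraid hx
  have hABA : (A * B * A) x = A (B x) := by rw [mul_apply, mul_apply, hAx]
  rw [hABA]
  set y := q⁻¹ • A (B x)
  have hqy : q • y = A (B x) := smul_inv_smul₀ hq₀ _
  have hBx : B x = q • x + y := smul_right_injective M hq₀ <| by
    calc q • B x = q ^ 2 • x + q • y := by rw [hqB, hqy]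
      _ = q • (q • x + y) := by module
  have hAy : A y = -(q • x) + q • y := smul_right_injective M hq₀ <| by
    calc q • A y = A (A (B x)) := by rw [← map_smul, hqy]
      _ = (q + 1) • (q • y) - q • (q • x + y) := by rw [apply_apply_of_hecke hA, ← hqy, hBx]
      _ = q • (-(q • x) + q • y) := by module
  have hBy : B y = y := by
    simp only [y, map_smul, apply_apply_apply_of_braid hbraid hAx]
  exact ⟨hAx, hBx, hAy, hBy, mem_range_of_hecke_relations hq hBx hAy hBy⟩

end Module.End

theorem stmt_5 (R : Module.End k (V ⊗[k] V)) (q : k)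
    (hbraid : R₁₂ R * R₂₃ R * R₁₂ R = R₂₃ R * R₁₂ R * R₂₃ R)
    (hHecke : (R - q • 1) * (R - 1) = 0)
    (hq : q * (q - 1) * (q ^ 2 - q + 1) ≠ 0)
    (x : V ⊗[k] (V ⊗[k] V))
    (hx : x ∈ LinearMap.range ((R₁₂ R - q • 1) * (R₂₃ R - 1))) :
    R₁₂ R x = x ∧
      R₂₃ R x = q • x + q⁻¹ • (R₁₂ R * R₂₃ R * R₁₂ R) x ∧
      R₁₂ R (q⁻¹ • (R₁₂ R * R₂₃ R * R₁₂ R) x) =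
        -(q • x) + q • (q⁻¹ • (R₁₂ R * R₂₃ R * R₁₂ R) x) ∧
      R₂₃ R (q⁻¹ • (R₁₂ R * R₂₃ R * R₁₂ R) x) = q⁻¹ • (R₁₂ R * R₂₃ R * R₁₂ R) x ∧
      q⁻¹ • (R₁₂ R * R₂₃ R * R₁₂ R) x ∈
        LinearMap.range ((R₂₃ R - q • 1) * (R₁₂ R - 1)) := by
  obtain ⟨hq₀₁, hq₂⟩ := mul_ne_zero_iff.mp hq
  exact Module.End.hecke_braid_relations (R₁₂_hecke hHecke) (R₂₃_hecke hHecke) hbraid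
    (left_ne_zero_of_mul hq₀₁) hq₂ hx
end

section
/- In the quadratic algebra A = k⟨x,y⟩/(yx − x² − y² − xy), the normally ordered monomials (monomials x^a y^b) span the degree-2 component A₂ but do not span the degree-3 component A₃. -/
noncomputable section

open FreeAlgebra

/-- The free algebra `ℚ⟨x, y⟩`. -/
abbrev F : Type := FreeAlgebra ℚ Bool

/-- The generator `x`. -/
def x : F := FreeAlgebra.ι ℚ false

/-- The generator `y`. -/
def y : F := FreeAlgebra.ι ℚ true

/-- The single quadratic relation `y x = x² + y² + x y`. -/
def rel : F → F → Prop := fun a b => a = y * x ∧ b = x * x + y * y + x * y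

/-- The quadratic algebra `A = ℚ⟨x,y⟩ / (yx = x² + y² + xy)`. -/
abbrev A : Type := RingQuot rel

/-- The quotient map. -/
def π : F →ₐ[ℚ] A := RingQuot.mkAlgHom ℚ rel

abbrev M := FreeMonoid Bool

instance : DecidableEq M := inferInstanceAs (DecidableEq (List Bool))

def e : F ≃ₐ[ℚ] MonoidAlgebra ℚ M := FreeAlgebra.equivMonoidAlgebraFreeMonoid

/-- the word `y x x` -/
def w1 : M := FreeMonoid.of true * FreeMonoid.of false * FreeMonoid.of false
/-- the word `y y x` -/
def w2 : M := FreeMonoid.of true * FreeMonoid.of true * FreeMonoid.of false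

def φ : MonoidAlgebra ℚ M →ₗ[ℚ] ℚ :=
  (Finsupp.lapply w1 + Finsupp.lapply w2) ∘ₗ (MonoidAlgebra.coeffLinearEquiv ℚ).toLinearMap

lemma φ_apply (z : MonoidAlgebra ℚ M) : φ z = z.coeff w1 + z.coeff w2 := rfl

/-- the linear functional on the free algebra -/
def g : F →ₗ[ℚ] ℚ := φ ∘ₗ e.toLinearMap

lemma g_word (a b c : Bool) :
    g (FreeAlgebra.ι ℚ a * FreeAlgebra.ι ℚ b * FreeAlgebra.ι ℚ c) =
      (if FreeMonoid.of a * FreeMonoid.of b * FreeMonoid.of c = w1 then (1:ℚ) else 0) +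
      (if FreeMonoid.of a * FreeMonoid.of b * FreeMonoid.of c = w2 then (1:ℚ) else 0) := by
  simp [g, φ_apply, map_mul, e, FreeAlgebra.equivMonoidAlgebraFreeMonoid,
    MonoidAlgebra.single_mul_single, MonoidAlgebra.coeff_single, Finsupp.single_apply]

-- the key combinatorial vanishing, on singles
lemma key_single (u v : List Bool) (a b : ℚ) :
    φ (MonoidAlgebra.single (FreeMonoid.ofList u) a *
        (e (y * x) - e (x*x) - e (y*y) - e (x*y)) *
        MonoidAlgebra.single (FreeMonoid.ofList v) b) = 0 := by
  have ew : ∀ s t : Bool, e (FreeAlgebra.ι ℚ s * FreeAlgebra.ι ℚ t) =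
      MonoidAlgebra.single (FreeMonoid.ofList [s, t]) 1 := by
    intro s t
    simp [map_mul, e, FreeAlgebra.equivMonoidAlgebraFreeMonoid, MonoidAlgebra.single_mul_single]
  simp only [x, y, ew, mul_sub, sub_mul, mul_add, add_mul, map_sub, map_add,
    MonoidAlgebra.single_mul_single, one_mul, mul_one, φ_apply]
  have hmul : ∀ (p q : List Bool), FreeMonoid.ofList p * FreeMonoid.ofList q
      = FreeMonoid.ofList (p ++ q) := fun _ _ => rfl
  have hw1 : w1 = FreeMonoid.ofList [true, false, false] := rfl
  have hw2 : w2 = FreeMonoid.ofList [true, true, false] := rfl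
  have hinj : ∀ p q : List Bool, (FreeMonoid.ofList p = FreeMonoid.ofList q) ↔ p = q :=
    fun p q => ⟨fun h => FreeMonoid.ofList.injective h, fun h => by rw [h]⟩
  simp only [MonoidAlgebra.coeff_single, Finsupp.single_apply, hmul, hw1, hw2, hinj]
  match u, v with
  | [], [c] => rcases c <;> simp
  | [c], [] => rcases c <;> simp
  | [], [] => simp
  | [], (c :: d :: l) => simp
  | (c :: d :: l), v =>
    have hne : ∀ (l v : List Bool) (s t u : Bool), l ++ s :: t :: v ≠ [u] := by
      intro l v s t u h
      apply_fun List.length at h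
      simp at h
      omega
    simp [List.append_assoc, hne]
  | [c], (d :: l) => simp

lemma key_all (z w : MonoidAlgebra ℚ M) :
    φ (z * (e (y * x) - e (x*x) - e (y*y) - e (x*y)) * w) = 0 := by
  induction z using MonoidAlgebra.induction_linear with
  | zero => simp
  | add p q hp hq => rw [add_mul, add_mul, map_add, hp, hq, add_zero]
  | single u a =>
    induction w using MonoidAlgebra.induction_linear with
    | zero => simp
    | add p q hp hq => rw [mul_add, map_add, hp, hq, add_zero]
    | single v b => exact key_single u v a b

lemma g_rel_aux (r : F) (hr : e r = e (y * x) - e (x*x) - e (y*y) - e (x*y)) :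
    ∀ c d : F, g (c * r * d) = 0 := by
  intro c d
  show φ (e (c * r * d)) = 0
  rw [show e (c * r * d) = e c * e r * e d by rw [map_mul, map_mul], hr]
  exact key_all (e c) (e d)

lemma g_mid : ∀ {u v : F}, RingQuot.Rel rel u v → ∀ c d : F, g (c * u * d) = g (c * v * d) := by
  intro u v h
  induction h with
  | of h =>
    intro c d
    obtain ⟨h1, h2⟩ := h
    subst h1 h2
    have := g_rel_aux (y * x - (x * x + y * y + x * y)) (by rw [map_sub, map_add, map_add]; abel) c d
    have hexp : c * (y * x - (x * x + y * y + x * y)) * d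
        = c * (y * x) * d - c * (x * x + y * y + x * y) * d := by noncomm_ring
    rw [hexp, map_sub, sub_eq_zero] at this
    exact this
  | add_left _ ih =>
    intro c d
    rename_i a b k _
    have h1 : c * (a + k) * d = c * a * d + c * k * d := by noncomm_ring
    have h2 : c * (b + k) * d = c * b * d + c * k * d := by noncomm_ring
    rw [h1, h2, map_add, map_add, ih c d]
  | mul_left _ ih =>
    intro c d
    rename_i a b k _
    have h1 : c * (a * k) * d = c * a * (k * d) := by noncomm_ring
    have h2 : c * (b * k) * d = c * b * (k * d) := by noncomm_ring
    rw [h1, h2, ih c (k * d)]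
  | mul_right _ ih =>
    intro c d
    rename_i k a b _
    have h1 : c * (k * a) * d = (c * k) * a * d := by noncomm_ring
    have h2 : c * (k * b) * d = (c * k) * b * d := by noncomm_ring
    rw [h1, h2, ih (c * k) d]

lemma g_sound : ∀ u v : F, RingQuot.Rel rel u v → g u = g v := by
  intro u v h
  have := g_mid h 1 1
  simpa using this

/-- the functional descends to A -/
def G0 : A → ℚ := fun a => Quot.lift (fun u => g u) g_sound a.toQuot

lemma pi_eq (w : F) : π w = ⟨Quot.mk _ w⟩ := by
  simp [π, RingQuot.mkAlgHom_def, RingQuot.mkRingHom_def]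

lemma G0_pi (w : F) : G0 (π w) = g w := by
  rw [pi_eq]
  rfl

def G : A →ₗ[ℚ] ℚ where
  toFun := G0
  map_add' := by
    intro u v
    obtain ⟨u, rfl⟩ := RingQuot.mkAlgHom_surjective ℚ rel u
    obtain ⟨v, rfl⟩ := RingQuot.mkAlgHom_surjective ℚ rel v
    show G0 (π u + π v) = G0 (π u) + G0 (π v)
    rw [← map_add, G0_pi, G0_pi, G0_pi, map_add]
  map_smul' := by
    intro q v
    obtain ⟨v, rfl⟩ := RingQuot.mkAlgHom_surjective ℚ rel v
    show G0 (q • π v) = q • G0 (π v)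
    rw [← map_smul, G0_pi, G0_pi, map_smul]

lemma G_pi (w : F) : G (π w) = g w := G0_pi w

-- evaluate g on the relevant words
lemma g_vals :
    g (x * x * x) = 0 ∧ g (x * x * y) = 0 ∧ g (x * y * y) = 0 ∧ g (y * y * y) = 0 ∧
      g (y * x * x) = 1 := by
  have cond1 : ∀ a b c : Bool, (FreeMonoid.of a * FreeMonoid.of b * FreeMonoid.of c = w1) ↔
      (a = true ∧ b = false ∧ c = false) := by
    intro a b c
    constructor
    · intro h
      have h' : ([a,b,c] : List Bool) = [true,false,false] := FreeMonoid.ofList.injective h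
      simpa using h'
    · rintro ⟨rfl, rfl, rfl⟩; rfl
  have cond2 : ∀ a b c : Bool, (FreeMonoid.of a * FreeMonoid.of b * FreeMonoid.of c = w2) ↔
      (a = true ∧ b = true ∧ c = false) := by
    intro a b c
    constructor
    · intro h
      have h' : ([a,b,c] : List Bool) = [true,true,false] := FreeMonoid.ofList.injective h
      simpa using h'
    · rintro ⟨rfl, rfl, rfl⟩; rfl
  refine ⟨?_, ?_, ?_, ?_, ?_⟩ <;>
    simp only [x, y, g_word, cond1, cond2] <;> norm_num

lemma pi_yx : π (y * x) = π (x * x) + π (y * y) + π (x * y) := by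
  have h : π (y * x) = π (x * x + y * y + x * y) := RingQuot.mkAlgHom_rel ℚ ⟨rfl, rfl⟩
  rw [h, map_add, map_add]


/-- The normally ordered monomials `x^a y^b` span the degree-2 component, but they do
not span the degree-3 component. -/
theorem stmt_18 :
    Submodule.span ℚ {π (x * x), π (x * y), π (y * y)} =
      Submodule.span ℚ
        (Set.range fun p : Bool × Bool => π (FreeAlgebra.ι ℚ p.1 * FreeAlgebra.ι ℚ p.2)) ∧
      Submodule.span ℚ {π (x * x * x), π (x * x * y), π (x * y * y), π (y * y * y)} ≠
        Submodule.span ℚ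
          (Set.range fun p : Bool × Bool × Bool =>
            π (FreeAlgebra.ι ℚ p.1 * FreeAlgebra.ι ℚ p.2.1 * FreeAlgebra.ι ℚ p.2.2)) := by
  constructor
  · apply le_antisymm
    · rw [Submodule.span_le]
      rintro z (rfl | rfl | rfl)
      · exact Submodule.subset_span ⟨(false, false), rfl⟩
      · exact Submodule.subset_span ⟨(false, true), rfl⟩
      · exact Submodule.subset_span ⟨(true, true), rfl⟩
    · rw [Submodule.span_le]
      rintro z ⟨⟨a, b⟩, rfl⟩
      have hxx : π (x * x) ∈ Submodule.span ℚ {π (x * x), π (x * y), π (y * y)} :=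
        Submodule.subset_span (by simp)
      have hxy : π (x * y) ∈ Submodule.span ℚ {π (x * x), π (x * y), π (y * y)} :=
        Submodule.subset_span (by simp)
      have hyy : π (y * y) ∈ Submodule.span ℚ {π (x * x), π (x * y), π (y * y)} :=
        Submodule.subset_span (by simp)
      rcases a <;> rcases b
      · exact hxx
      · exact hxy
      · show π (y * x) ∈ _
        rw [pi_yx]
        exact Submodule.add_mem _ (Submodule.add_mem _ hxx hyy) hxy
      · exact hyy
  · intro h
    have hmem : π (FreeAlgebra.ι ℚ true * FreeAlgebra.ι ℚ false * FreeAlgebra.ι ℚ false) ∈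
        Submodule.span ℚ
          (Set.range fun p : Bool × Bool × Bool =>
            π (FreeAlgebra.ι ℚ p.1 * FreeAlgebra.ι ℚ p.2.1 * FreeAlgebra.ι ℚ p.2.2)) :=
      Submodule.subset_span ⟨(true, false, false), rfl⟩
    rw [← h] at hmem
    obtain ⟨g0, g1, g2, g3, g4⟩ := g_vals
    have hker : Submodule.span ℚ {π (x * x * x), π (x * x * y), π (x * y * y), π (y * y * y)} ≤
        LinearMap.ker G := by
      rw [Submodule.span_le]
      rintro z (rfl | rfl | rfl | rfl) <;>
        simp only [SetLike.mem_coe, LinearMap.mem_ker, G_pi] <;> assumption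
    have : G (π (FreeAlgebra.ι ℚ true * FreeAlgebra.ι ℚ false * FreeAlgebra.ι ℚ false)) = 0 :=
      hker hmem
    rw [G_pi] at this
    have : g (y * x * x) = 0 := this
    rw [g4] at this
    exact one_ne_zero this


end
end
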